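/- Let k ≥ 2, M^0 = {k}, and define M^{i+1} = P(M^i) (misère ★-operator). Then M^2 = {k, k+1, …, 2k−1} ∪ {4k−1, 6k−1, 8k−1, …} = {k,…,2k−1} ∪ {2jk − 1 : j ≥ 2}. -/
import Mathlib


/-- `x` is a terminal position of the subtraction game with move set `M`:
no move `m ∈ M` satisfies `m ≤ x`. -/
def Terminal {α : Type*} [PartialOrder α] [Sub α] (M : Set α) (x : α) : Prop :=
  ∀ m ∈ M, ¬ m ≤ x

/-- The set of terminal positions `T_M`. -/
def Tset {α : Type*} [PartialOrder α] [Sub α] (M : Set α) : Set α :=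
  {x | Terminal M x}

/-- Misère-play P-positions of a vector subtraction game, by well-founded recursion:
`x` is a P-position iff it has at least one option, and every option `x - m` is an
N-position, i.e. is terminal or has an option `x - m - m'` that is a P-position.
(The guard `x - m - m' < x` is automatic when `0 ∉ M`; when `0 ∈ M` the game is drawn
everywhere and this definition correctly yields no P-positions.) -/
def IsP {α : Type*} [PartialOrder α] [Sub α] [WellFoundedLT α] (M : Set α) : α → Prop :=
  (wellFounded_lt (α := α)).fix fun x rec =>
    (∃ m ∈ M, m ≤ x) ∧ ∀ m ∈ M, m ≤ x →
      (Terminal M (x - m) ∨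
        ∃ m' ∈ M, m' ≤ x - m ∧ ∃ h : x - m - m' < x, rec (x - m - m') h)

/-- The set of misère P-positions (this is also the `★`-operator `M ↦ M★`). -/
def Pset {α : Type*} [PartialOrder α] [Sub α] [WellFoundedLT α] (M : Set α) : Set α :=
  {x | IsP M x}

/-- `x` is a misère N-position: terminal, or has an option that is a P-position. -/
def IsN {α : Type*} [PartialOrder α] [Sub α] [WellFoundedLT α] (M : Set α) (x : α) : Prop :=
  Terminal M x ∨ ∃ m ∈ M, m ≤ x ∧ IsP M (x - m)

/-- The set of misère N-positions. -/
def Nset {α : Type*} [PartialOrder α] [Sub α] [WellFoundedLT α] (M : Set α) : Set α :=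
  {x | IsN M x}

/-- The set of minimal elements of `M`. -/
def minSet {α : Type*} [PartialOrder α] (M : Set α) : Set α :=
  {m ∈ M | ∀ m' ∈ M, m' ≤ m → m' = m}

/-- Pointwise convergence of the iterates of the `★`-operator to the set `L`. -/
def LimitsTo {α : Type*} [PartialOrder α] [Sub α] [WellFoundedLT α] (M L : Set α) : Prop :=
  ∀ x : α, ∃ N : ℕ, ∀ i ≥ N, (x ∈ Pset^[i] M ↔ x ∈ L)

/-- The one-dimensional reflexive games `M_k` (with `M_0 = ∅`). -/
def Mk (k : ℕ) : Set ℕ :=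
  {n | 1 ≤ k ∧ ∃ i j : ℕ, k ≤ j ∧ j ≤ 2 * k - 1 ∧ n = i * (3 * k - 1) + j}

lemma isP_unfold (M : Set ℕ) (x : ℕ) :
    IsP M x ↔ (∃ m ∈ M, m ≤ x) ∧ ∀ m ∈ M, m ≤ x →
      (Terminal M (x - m) ∨
        ∃ m' ∈ M, m' ≤ x - m ∧ ∃ h : x - m - m' < x, IsP M (x - m - m')) := by
  conv_lhs => rw [IsP, WellFounded.fix_eq]
  rfl

lemma isP_iff (M : Set ℕ) (hM : ∀ m ∈ M, 1 ≤ m) (x : ℕ) :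
    IsP M x ↔ (∃ m ∈ M, m ≤ x) ∧ ∀ m ∈ M, m ≤ x →
      (Terminal M (x - m) ∨ ∃ m' ∈ M, m' ≤ x - m ∧ IsP M (x - m - m')) := by
  rw [isP_unfold]
  constructor <;> rintro ⟨h1, h2⟩ <;> refine ⟨h1, fun m hm hmx => ?_⟩
  · rcases h2 m hm hmx with h | ⟨m', hm', h1', _, h2'⟩
    · exact Or.inl h
    · exact Or.inr ⟨m', hm', h1', h2'⟩
  · rcases h2 m hm hmx with h | ⟨m', hm', h1', h2'⟩
    · exact Or.inl h
    · refine Or.inr ⟨m', hm', h1', ⟨?_, h2'⟩⟩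
      have := hM m hm
      omega
lemma pset_singleton (k : ℕ) (hk : 1 ≤ k) (x : ℕ) :
    IsP ({k} : Set ℕ) x ↔ k ≤ x % (2 * k) := by
  induction x using Nat.strong_induction_on with
  | _ x ih =>
  rw [isP_iff _ (by rintro m rfl; omega)]
  simp only [Set.mem_singleton_iff, forall_eq, exists_eq_left, Terminal]
  rcases lt_or_ge x k with h | h
  · rw [Nat.mod_eq_of_lt (by omega)]
    omega
  rcases lt_or_ge x (2 * k) with h2 | h2
  · rw [Nat.mod_eq_of_lt h2]
    constructor
    · intro; omega
    · intro _
      exact ⟨h, fun _ => Or.inl (by omega)⟩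
  · have hx : x % (2 * k) = (x - 2 * k) % (2 * k) := Nat.mod_eq_sub_mod h2
    have hih := ih (x - 2 * k) (by omega)
    have hkk : x - k - k = x - 2 * k := by omega
    rw [hx]
    constructor
    · rintro ⟨-, h3⟩
      rcases h3 (by omega) with h3 | ⟨-, h3⟩
      · exact absurd (by omega) h3
      · rwa [hkk, hih] at h3
    · intro h3
      exact ⟨h, fun _ => Or.inr ⟨by omega, by rwa [hkk, hih]⟩⟩

lemma modL (k j : ℕ) (hk : 1 ≤ k) (hj : 1 ≤ j) :
    (2 * j * k - 1) % (2 * k) = 2 * k - 1 := by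
  obtain ⟨j', rfl⟩ : ∃ j', j = j' + 1 := ⟨j - 1, by omega⟩
  have e : 2 * (j' + 1) * k = 2 * k * j' + 2 * k := by ring
  rw [show 2 * (j' + 1) * k - 1 = 2 * k * j' + (2 * k - 1) by omega, Nat.mul_add_mod,
    Nat.mod_eq_of_lt (by omega)]

lemma pset_A (k : ℕ) (hk : 2 ≤ k) (x : ℕ) :
    IsP {n : ℕ | k ≤ n % (2 * k)} x ↔
      (k ≤ x ∧ x ≤ 2 * k - 1) ∨ ∃ j : ℕ, 2 ≤ j ∧ x = 2 * j * k - 1 := by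
  set A : Set ℕ := {n : ℕ | k ≤ n % (2 * k)} with hA
  have hmemA : ∀ n, n ∈ A ↔ k ≤ n % (2 * k) := fun n => Iff.rfl
  have hgeA : ∀ n ∈ A, k ≤ n := fun n hn => le_trans hn (Nat.mod_le _ _)
  have hkA : k ∈ A := by rw [hmemA, Nat.mod_eq_of_lt (by omega)]
  have hL_ge : ∀ n, ((k ≤ n ∧ n ≤ 2 * k - 1) ∨ ∃ j, 2 ≤ j ∧ n = 2 * j * k - 1) → k ≤ n := by
    rintro n (⟨h1, -⟩ | ⟨j, hj, rfl⟩)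
    · exact h1
    · have : 2 * 2 * k ≤ 2 * j * k := Nat.mul_le_mul (by omega) (le_refl k)
      omega
  induction x using Nat.strong_induction_on with
  | _ x ih =>
  rw [isP_iff _ (fun m hm => by have := hgeA m hm; omega)]
  obtain ⟨q, r, hx, hr⟩ : ∃ q r, x = 2 * k * q + r ∧ r < 2 * k :=
    ⟨x / (2 * k), x % (2 * k), (Nat.div_add_mod x (2 * k)).symm, Nat.mod_lt _ (by omega)⟩
  have hxmod : x % (2 * k) = r := by rw [hx, Nat.mul_add_mod, Nat.mod_eq_of_lt hr]
  rcases lt_or_ge x k with hxk | hxk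
  · -- x < k : both sides false
    refine iff_of_false ?_ (fun h => absurd (hL_ge x h) (by omega))
    rintro ⟨⟨m, hm, hmx⟩, -⟩
    exact absurd (hgeA m hm) (by omega)
  rcases lt_or_ge x (2 * k) with hx2 | hx2
  · -- k ≤ x < 2k : both sides true
    refine iff_of_true ⟨⟨k, hkA, hxk⟩, fun m hm hmx => Or.inl fun m' hm' => ?_⟩ (by omega)
    have := hgeA m hm; have := hgeA m' hm'
    omega
  -- now 2k ≤ x
  have hq1 : 1 ≤ q := by
    rcases Nat.eq_zero_or_pos q with rfl | h
    · omega
    · exact h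
  rcases eq_or_lt_of_le (show r ≤ 2 * k - 1 by omega) with hr1 | hr1
  · -- r = 2k - 1 : both sides true
    refine iff_of_true ⟨⟨k, hkA, by omega⟩, fun m hm hmx => ?_⟩ ?_
    · obtain ⟨p, s, hm2, hs2⟩ : ∃ p s, m = 2 * k * p + s ∧ s < 2 * k :=
        ⟨m / (2 * k), m % (2 * k), (Nat.div_add_mod m (2 * k)).symm, Nat.mod_lt _ (by omega)⟩
      have hs1 : k ≤ s := by
        have : m % (2 * k) = s := by rw [hm2, Nat.mul_add_mod, Nat.mod_eq_of_lt hs2]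
        have := (hmemA m).mp hm
        omega
      have hpq : p ≤ q := by
        by_contra h
        have h2 : 2 * k * (q + 1) ≤ 2 * k * p := Nat.mul_le_mul (le_refl (2 * k)) (by omega)
        have e : 2 * k * (q + 1) = 2 * k * q + 2 * k := by ring
        omega
      rcases eq_or_lt_of_le hpq with rfl | hplt
      · -- p = q : x - m terminal
        refine Or.inl fun m' hm' => ?_
        have := hgeA m' hm'
        omega
      · -- p < q : answer with m' = x - m - k, landing on k
        obtain ⟨d, rfl⟩ : ∃ d, q = p + d + 1 := ⟨q - p - 1, by omega⟩
        have e1 : 2 * k * (p + d + 1) = 2 * k * p + 2 * k * d + 2 * k := by ring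
        refine Or.inr ⟨x - m - k, ?_, by omega, ?_⟩
        · rw [hmemA, show x - m - k = 2 * k * d + (3 * k - 1 - s) by omega, Nat.mul_add_mod,
            Nat.mod_eq_of_lt (by omega)]
          omega
        · rw [show x - m - (x - m - k) = k by omega]
          exact (ih k (by omega)).mpr (Or.inl (by omega))
    · exact Or.inr ⟨q + 1, by omega, by
        have e : 2 * (q + 1) * k = 2 * k * q + 2 * k := by ring
        omega⟩
  · -- r ≤ 2k - 2 : both sides false
    have hnotL : ¬ ((k ≤ x ∧ x ≤ 2 * k - 1) ∨ ∃ j, 2 ≤ j ∧ x = 2 * j * k - 1) := by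
      rintro (⟨-, h⟩ | ⟨j, hj, hxj⟩)
      · omega
      · have h1 : x % (2 * k) = 2 * k - 1 := by rw [hxj]; exact modL k j (by omega) (by omega)
        omega
    refine iff_of_false ?_ hnotL
    rintro ⟨-, h2⟩
    obtain ⟨q', rfl⟩ : ∃ q', q = q' + 1 := ⟨q - 1, by omega⟩
    have e1 : 2 * k * (q' + 1) = 2 * k * q' + 2 * k := by ring
    -- choose the move m with x - m ∈ [k, 2k-1]
    obtain ⟨m, hmA, hmx, hy1, hy2⟩ :
        ∃ m, m ∈ A ∧ m ≤ x ∧ k ≤ x - m ∧ x - m ≤ 2 * k - 1 := by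
      rcases lt_or_ge r k with hrk | hrk
      · refine ⟨2 * k * q' + k, ?_, by omega, by omega, by omega⟩
        rw [hmemA, Nat.mul_add_mod, Nat.mod_eq_of_lt (by omega)]
      · refine ⟨2 * k * q' + (2 * k - 1), ?_, by omega, by omega, by omega⟩
        rw [hmemA, Nat.mul_add_mod, Nat.mod_eq_of_lt (by omega)]
        omega
    rcases h2 m hmA hmx with hT | ⟨m', hm', hle, hP'⟩
    · exact hT k hkA (by omega)
    · have hgem' := hgeA m' hm'
      have h5 := hL_ge _ ((ih (x - m - m') (by omega)).mp hP')
      omega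

theorem second_iterate (k : ℕ) (hk : 2 ≤ k) :
    Pset^[2] ({k} : Set ℕ) =
      Set.Icc k (2 * k - 1) ∪ {n : ℕ | ∃ j : ℕ, 2 ≤ j ∧ n = 2 * j * k - 1} := by
  have hA : Pset ({k} : Set ℕ) = {n : ℕ | k ≤ n % (2 * k)} := by
    ext n
    exact pset_singleton k (by omega) n
  have h2 : Pset^[2] ({k} : Set ℕ) = Pset (Pset ({k} : Set ℕ)) := by
    rw [Function.iterate_succ, Function.iterate_one, Function.comp_apply]
  rw [h2, hA]
  ext n
  simp only [Pset, Set.mem_setOf_eq, Set.mem_union, Set.mem_Icc]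
  exact pset_A k hk n
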